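/- Let D be a division ring, m, n, p, q be positive integers, and φ : M_{m×n}(D) → M_{p×q}(D) be an adjacency preserver with φ(0) = 0. Let d be a 1-dimensional subspace of D^n and e a 1-dimensional subspace of ᵗD^m. If there exists a 1-dimensional subspace d' of D^q such that φ(R_d) ⊆ R_{d'} and φ(L_e) ⊆ R_{d'}, or there exists a 1-dimensional subspace e' of ᵗD^p such that φ(R_d) ⊆ L_{e'} and φ(L_e) ⊆ L_{e'}, then φ is degenerate with respect to 0, i.e. there exist a nonzero column vector ᵗx ∈ ᵗD^p and a nonzero row vector y ∈ D^q such that φ maps every matrix of rank at most 1 into R(y) ∪ L(ᵗx). -/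

import Mathlib

open Matrix

variable {D : Type*} [DivisionRing D]

/-- The rank of a matrix over a division ring: the dimension of its row space,
i.e. of the left `D`-subspace of `D^n` spanned by the rows. -/
noncomputable def rowRank {m n : ℕ} (A : Matrix (Fin m) (Fin n) D) : ℕ :=
  Module.finrank D (Submodule.span D (Set.range fun i => A i))

/-- Two matrices are adjacent if their difference has rank one. -/
def Adjacent {m n : ℕ} (A B : Matrix (Fin m) (Fin n) D) : Prop :=
  rowRank (A - B) = 1

/-- `R(x)`: the set of matrices of the form `ᵗu x` for a fixed row vector `x`. -/
def Rvec {m n : ℕ} (x : Fin n → D) : Set (Matrix (Fin m) (Fin n) D) :=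
  { M | ∃ u : Fin m → D, ∀ i j, M i j = u i * x j }

/-- `L(ᵗy)`: the set of matrices of the form `ᵗy v` for a fixed column vector `ᵗy`. -/
def Lvec {m n : ℕ} (y : Fin m → D) : Set (Matrix (Fin m) (Fin n) D) :=
  { M | ∃ v : Fin n → D, ∀ i j, M i j = y i * v j }

/-- `R_d`: the matrices whose row space is contained in `d`. -/
def Rsub {m n : ℕ} (d : Submodule D (Fin n → D)) : Set (Matrix (Fin m) (Fin n) D) :=
  { M | ∀ i, M i ∈ d }

/-- `L_e`: the matrices whose column space (a right subspace, i.e. a `Dᵐᵒᵖ`-submodule)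
is contained in `e`. -/
def Lsub {m n : ℕ} (e : Submodule Dᵐᵒᵖ (Fin m → D)) : Set (Matrix (Fin m) (Fin n) D) :=
  { M | ∀ j, (fun i => M i j) ∈ e }

/-- The orthogonal set of a set `e` of column vectors. -/
def perpSet {m : ℕ} (e : Set (Fin m → D)) : Set (Fin m → D) :=
  { u | ∀ v ∈ e, ∑ i, u i * v i = 0 }

/-- The `p × q` matrix with upper-left block `B` and zeros elsewhere. -/
def pad {m n : ℕ} (p q : ℕ) (B : Matrix (Fin m) (Fin n) D) :
    Matrix (Fin p) (Fin q) D :=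
  Matrix.of fun i j =>
    if hi : (i : ℕ) < m then if hj : (j : ℕ) < n then B ⟨i, hi⟩ ⟨j, hj⟩ else 0 else 0

/-- `φ` is degenerate with respect to `A`. -/
def DegenerateAt {m n p q : ℕ} (φ : Matrix (Fin m) (Fin n) D → Matrix (Fin p) (Fin q) D)
    (A : Matrix (Fin m) (Fin n) D) : Prop :=
  ∃ x : Fin p → D, x ≠ 0 ∧ ∃ y : Fin q → D, y ≠ 0 ∧
    ∀ M : Matrix (Fin m) (Fin n) D, rowRank M ≤ 1 →
      φ (A + M) - φ A ∈ Rvec y ∪ Lvec x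

/-- `φ` is degenerate: degenerate with respect to every matrix. -/
def Degenerate {m n p q : ℕ} (φ : Matrix (Fin m) (Fin n) D → Matrix (Fin p) (Fin q) D) :
    Prop :=
  ∀ A, DegenerateAt φ A

/-- A map (sending `0` to `0`) is degenerate with respect to `0` iff it maps every matrix of
rank at most one into `R(y) ∪ L(ᵗx)` for some nonzero `y`, `x`. -/
def DegZero {m n p q : ℕ} (φ : Matrix (Fin m) (Fin n) D → Matrix (Fin p) (Fin q) D) :
    Prop :=
  ∃ x : Fin p → D, x ≠ 0 ∧ ∃ y : Fin q → D, y ≠ 0 ∧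
    ∀ M : Matrix (Fin m) (Fin n) D, rowRank M ≤ 1 → φ M ∈ Rvec y ∪ Lvec x

/-- A standard adjacency preserver. -/
def Standard {m n p q : ℕ} (φ : Matrix (Fin m) (Fin n) D → Matrix (Fin p) (Fin q) D) :
    Prop :=
  (m ≤ p ∧ n ≤ q ∧ ∃ τ : D ≃+* D, ∃ T : Matrix (Fin p) (Fin p) D,
    ∃ S : Matrix (Fin q) (Fin q) D, ∃ R : Matrix (Fin p) (Fin q) D,
    IsUnit T ∧ IsUnit S ∧ ∀ A, φ A = T * pad p q (A.map τ) * S + R) ∨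
  (n ≤ p ∧ m ≤ q ∧ ∃ σ : D → D, Function.Bijective σ ∧ σ 1 = 1 ∧
    (∀ a b, σ (a + b) = σ a + σ b) ∧ (∀ a b, σ (a * b) = σ b * σ a) ∧
    ∃ T : Matrix (Fin p) (Fin p) D, ∃ S : Matrix (Fin q) (Fin q) D,
    ∃ R : Matrix (Fin p) (Fin q) D, IsUnit T ∧ IsUnit S ∧
    ∀ A, φ A = T * pad p q (A.map σ).transpose * S + R)

/-- A division ring is EAS if every (unital) ring endomorphism of it is surjective. -/
def EAS (D : Type*) [DivisionRing D] : Prop :=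
  ∀ f : D →+* D, Function.Surjective f

/-- A set of matrices is adjacent if any two distinct members are adjacent. -/
def IsAdjacentSet {m n : ℕ} (S : Set (Matrix (Fin m) (Fin n) D)) : Prop :=
  ∀ A ∈ S, ∀ B ∈ S, A ≠ B → Adjacent A B

/-!
Since `φ 0 = 0`, `φ` maps rank-one matrices to rank-one matrices. In the first case write
`R_{d'} = R(y)`, `d = D x₀`, `e = ᵗw D`, and call a rank-one `A` bad if `φ A ∉ R(y)`. A bad
`A = ᵗu v` has `v ∉ d` and `ᵗu ∉ e`, so `ᵗu x₀` and `ᵗw v` are good matrices adjacent to it.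
If a bad `A` and a good rank-one `G` are adjacent, write `φ A = ᵗa z` and `φ G = ᵗg y`: as `z`
and `y` are independent, `rank (ᵗa z - ᵗg y) = 1` forces `ᵗg ∈ ᵗa D`. Hence two bad matrices
with a common good neighbour have images in the same `L(ᵗa)`, and any two bad matrices
`ᵗu₁ v₁`, `ᵗu₂ v₂` are linked in this way, possibly through `ᵗu₁ v₂`. So all bad matrices are
mapped into one `L(ᵗa)`. The second case is the first one for `A ↦ ᵗφ(A)`, read over `Dᵒᵖ`,
which exchanges the sets `R(·)` and `L(·)`.
-/

def IsRankOne {K : Type*} [DivisionRing K] {ι κ : Type*} (M : Matrix ι κ K) : Prop :=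
  ∃ u v, u ≠ 0 ∧ v ≠ 0 ∧ M = vecMulVec u v

section RankOne

variable {K : Type*} [DivisionRing K] {ι κ : Type*}

theorem vecMulVec_zero_right (u : ι → K) : vecMulVec u (0 : κ → K) = 0 :=
  ext fun _ _ => mul_zero _

theorem IsRankOne.vecMulVec {u : ι → K} {v : κ → K} (hu : u ≠ 0) (hv : v ≠ 0) :
    IsRankOne (vecMulVec u v) :=
  ⟨u, v, hu, hv, rfl⟩

theorem IsRankOne.ne_zero {M : Matrix ι κ K} (hM : IsRankOne M) : M ≠ 0 := by
  obtain ⟨u, v, hu, hv, rfl⟩ := hM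
  obtain ⟨i, hi⟩ := Function.ne_iff.mp hu
  obtain ⟨j, hj⟩ := Function.ne_iff.mp hv
  exact fun h => mul_ne_zero hi hj congr($h i j)

theorem IsRankOne.transpose_map_op {M : Matrix ι κ K} (hM : IsRankOne M) :
    IsRankOne (M.map MulOpposite.op)ᵀ := by
  obtain ⟨u, v, hu, hv, rfl⟩ := hM
  refine ⟨MulOpposite.op ∘ v, MulOpposite.op ∘ u, ?_, ?_, ?_⟩
  · simpa [funext_iff] using hv
  · simpa [funext_iff] using hu
  · ext i j
    simp [vecMulVec_apply]

end RankOne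

theorem rowRank_zero {m n : ℕ} : rowRank (0 : Matrix (Fin m) (Fin n) D) = 0 := by
  rw [rowRank, Submodule.span_eq_bot.mpr (by rintro _ ⟨i, rfl⟩; rfl), finrank_bot]

theorem rowRank_vecMulVec {m n : ℕ} {u : Fin m → D} {v : Fin n → D} (hu : u ≠ 0) (hv : v ≠ 0) :
    rowRank (vecMulVec u v) = 1 := by
  obtain ⟨i, hi⟩ := Function.ne_iff.mp hu
  have hrows : Set.range (fun i => vecMulVec u v i) ⊆ Submodule.span D {v} := by
    rintro _ ⟨k, rfl⟩
    exact Submodule.mem_span_singleton.mpr ⟨u k, rfl⟩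
  have hv_mem : v ∈ Submodule.span D (Set.range fun i => vecMulVec u v i) := by
    have h := Submodule.smul_mem _ (u i)⁻¹
      (Submodule.subset_span (Set.mem_range_self i) :
        vecMulVec u v i ∈ Submodule.span D (Set.range fun i => vecMulVec u v i))
    have hrow : (u i)⁻¹ • vecMulVec u v i = v := by
      ext j
      simp [vecMulVec_apply, ← mul_assoc, inv_mul_cancel₀ hi]
    rwa [hrow] at h
  rw [rowRank, le_antisymm (Submodule.span_le.mpr hrows)
    (Submodule.span_le.mpr (Set.singleton_subset_iff.mpr hv_mem)), finrank_span_singleton hv]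

theorem exists_eq_vecMulVec_of_rowRank_le_one {m n : ℕ} {M : Matrix (Fin m) (Fin n) D}
    (h : rowRank M ≤ 1) : ∃ u v, M = vecMulVec u v := by
  have : Module.Finite D (Submodule.span D (Set.range fun i => M i)) :=
    FiniteDimensional.span_of_finite D (Set.finite_range _)
  obtain ⟨v, hv⟩ := finrank_le_one_iff.mp h
  choose u hu using fun i => hv ⟨M i, Submodule.subset_span ⟨i, rfl⟩⟩
  exact ⟨u, v, funext fun i => (congrArg Subtype.val (hu i)).symm⟩

theorem rowRank_eq_one_iff {m n : ℕ} {M : Matrix (Fin m) (Fin n) D} :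
    rowRank M = 1 ↔ IsRankOne M := by
  refine ⟨fun h => ?_, fun ⟨u, v, hu, hv, hM⟩ => hM ▸ rowRank_vecMulVec hu hv⟩
  obtain ⟨u, v, rfl⟩ := exists_eq_vecMulVec_of_rowRank_le_one h.le
  refine ⟨u, v, ?_, ?_, rfl⟩ <;> rintro rfl
  · rw [zero_vecMulVec, rowRank_zero] at h
    exact zero_ne_one h
  · rw [vecMulVec_zero_right, rowRank_zero] at h
    exact zero_ne_one h

section Subsets

variable {K : Type*} [DivisionRing K] {m n : ℕ}

theorem mem_Rvec_iff {M : Matrix (Fin m) (Fin n) K} {y : Fin n → K} :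
    M ∈ Rvec y ↔ ∃ u, M = vecMulVec u y :=
  ⟨fun ⟨u, h⟩ => ⟨u, ext h⟩, fun ⟨u, h⟩ => ⟨u, fun i j => by rw [h, vecMulVec_apply]⟩⟩

theorem mem_Lvec_iff {M : Matrix (Fin m) (Fin n) K} {x : Fin m → K} :
    M ∈ Lvec x ↔ ∃ v, M = vecMulVec x v :=
  ⟨fun ⟨v, h⟩ => ⟨v, ext h⟩, fun ⟨v, h⟩ => ⟨v, fun i j => by rw [h, vecMulVec_apply]⟩⟩

theorem zero_mem_Rvec (y : Fin n → K) : (0 : Matrix (Fin m) (Fin n) K) ∈ Rvec y :=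
  ⟨0, fun _ _ => (zero_mul _).symm⟩

theorem transpose_map_op_mem_Rvec_iff {M : Matrix (Fin m) (Fin n) K} {x : Fin m → K} :
    (M.map MulOpposite.op)ᵀ ∈ Rvec (MulOpposite.op ∘ x) ↔ M ∈ Lvec x := by
  constructor
  · rintro ⟨u, hu⟩
    exact ⟨fun j => (u j).unop, fun i j => by simpa using congrArg MulOpposite.unop (hu j i)⟩
  · rintro ⟨v, hv⟩
    exact ⟨fun j => MulOpposite.op (v j), fun i j => by simp [hv]⟩

theorem transpose_map_op_mem_Lvec_iff {M : Matrix (Fin m) (Fin n) K} {y : Fin n → K} :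
    (M.map MulOpposite.op)ᵀ ∈ Lvec (MulOpposite.op ∘ y) ↔ M ∈ Rvec y := by
  constructor
  · rintro ⟨v, hv⟩
    exact ⟨fun i => (v i).unop, fun i j => by simpa using congrArg MulOpposite.unop (hv j i)⟩
  · rintro ⟨u, hu⟩
    exact ⟨fun i => MulOpposite.op (u i), fun i j => by simp [hu]⟩

theorem Lvec_subset_of_mem {N : Matrix (Fin m) (Fin n) K} {a b : Fin m → K} (hN : N ≠ 0)
    (ha : N ∈ Lvec a) (hb : N ∈ Lvec b) : (Lvec b : Set (Matrix (Fin m) (Fin n) K)) ⊆ Lvec a := by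
  obtain ⟨v, rfl⟩ := mem_Lvec_iff.mp ha
  obtain ⟨v', hv'⟩ := hb
  obtain ⟨j, hj⟩ : ∃ j, v' j ≠ 0 := by
    by_contra! h
    exact hN (ext fun i j => by rw [hv', h j, mul_zero, Matrix.zero_apply])
  rintro _ ⟨v'', hv''⟩
  refine ⟨fun k => v j * (v' j)⁻¹ * v'' k, fun i k => ?_⟩
  have hbi : b i = a i * (v j * (v' j)⁻¹) := by
    rw [← mul_inv_cancel_right₀ hj (b i), ← hv' i j, vecMulVec_apply, mul_assoc]
  rw [hv'', hbi]
  simp only [mul_assoc]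

end Subsets

section Subspaces

variable {m n : ℕ}

theorem exists_Rsub_subset_Rvec {d : Submodule D (Fin n → D)} (hd : Module.finrank D d = 1) :
    ∃ y, y ≠ 0 ∧ (Rsub d : Set (Matrix (Fin m) (Fin n) D)) ⊆ Rvec y := by
  obtain ⟨y, hy0, hy⟩ := finrank_eq_one_iff'.mp hd
  refine ⟨y, fun h => hy0 (Subtype.ext h), fun M hM => ?_⟩
  choose c hc using fun i => hy ⟨M i, hM i⟩
  exact ⟨c, fun i j => (congrFun (congrArg Subtype.val (hc i)) j).symm⟩

theorem exists_Lsub_subset_Lvec {e : Submodule Dᵐᵒᵖ (Fin m → D)}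
    (he : Module.finrank Dᵐᵒᵖ e = 1) :
    ∃ x, x ≠ 0 ∧ (Lsub e : Set (Matrix (Fin m) (Fin n) D)) ⊆ Lvec x := by
  obtain ⟨x, hx0, hx⟩ := finrank_eq_one_iff'.mp he
  refine ⟨x, fun h => hx0 (Subtype.ext h), fun M hM => ?_⟩
  choose c hc using fun j => hx ⟨fun i => M i j, hM j⟩
  exact ⟨fun j => (c j).unop, fun i j => (congrFun (congrArg Subtype.val (hc j)) i).symm⟩

theorem vecMulVec_mem_Rsub {d : Submodule D (Fin n → D)} (u : Fin m → D) {x : Fin n → D}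
    (hx : x ∈ d) : vecMulVec u x ∈ Rsub d :=
  fun i => d.smul_mem (u i) hx

theorem vecMulVec_mem_Lsub {e : Submodule Dᵐᵒᵖ (Fin m → D)} {w : Fin m → D} (hw : w ∈ e)
    (v : Fin n → D) : vecMulVec w v ∈ Lsub e :=
  fun j => e.smul_mem (MulOpposite.op (v j)) hw

end Subspaces

theorem vecMulVec_mem_Lvec_of_isRankOne_sub {K : Type*} [DivisionRing K] {p q : ℕ}
    {a b : Fin p → K} {y z : Fin q → K} (hy : y ≠ 0) (hz : vecMulVec a z ∉ Rvec y)
    (h : IsRankOne (vecMulVec a z - vecMulVec b y)) : vecMulVec b y ∈ Lvec a := by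
  obtain ⟨c, w, -, -, hcw⟩ := h
  have hrow : ∀ i, a i • z - b i • y = c i • w := fun i => congrFun hcw i
  obtain ⟨i₀, ha₀⟩ : ∃ i, a i ≠ 0 := by
    by_contra! ha
    exact hz (by rw [show a = 0 from funext ha, zero_vecMulVec]; exact zero_mem_Rvec y)
  have hind : ∀ s t : K, s • y + t • z = 0 → s = 0 ∧ t = 0 := by
    refine LinearIndependent.pair_iff.mp ((LinearIndependent.pair_iff' hy).mpr fun k hk => hz ?_)
    exact ⟨fun i => a i * k, fun i j => by rw [← hk, vecMulVec_apply]; simp [mul_assoc]⟩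
  have hc₀ : c i₀ ≠ 0 := by
    intro hc
    exact ha₀ (hind (-b i₀) (a i₀) (by rw [neg_smul, neg_add_eq_sub, hrow, hc, zero_smul])).2
  -- Row `i` minus `c i * (c i₀)⁻¹` times row `i₀` is a combination of `y` and `z` equal to `0`.
  have hprop : ∀ i, a i = c i * (c i₀)⁻¹ * a i₀ ∧ b i = c i * (c i₀)⁻¹ * b i₀ := by
    intro i
    set k := c i * (c i₀)⁻¹
    have hk := hind (k * b i₀ - b i) (a i - k * a i₀) (by
      have h₀ : k • (a i₀ • z - b i₀ • y) = c i • w := by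
        rw [hrow, smul_smul, inv_mul_cancel_right₀ hc₀]
      rw [← sub_eq_zero.mpr ((hrow i).trans h₀.symm)]
      simp only [sub_smul, mul_smul, smul_sub]
      abel)
    exact ⟨sub_eq_zero.mp hk.2, (sub_eq_zero.mp hk.1).symm⟩
  refine ⟨((a i₀)⁻¹ * b i₀) • y, fun i j => ?_⟩
  rw [vecMulVec_apply, Pi.smul_apply, smul_eq_mul, (hprop i).1, (hprop i).2]
  simp only [mul_assoc, mul_inv_cancel_left₀ ha₀]

section AdjacencyPreserver

variable {K : Type*} [DivisionRing K] {m n p q : ℕ}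
  {φ : Matrix (Fin m) (Fin n) D → Matrix (Fin p) (Fin q) K}

theorem isRankOne_apply (hφ : ∀ A B, IsRankOne (A - B) → IsRankOne (φ A - φ B))
    (h0 : φ 0 = 0) {A : Matrix (Fin m) (Fin n) D} (hA : IsRankOne A) : IsRankOne (φ A) := by
  simpa [h0] using hφ A 0 (by simpa using hA)

theorem mem_Lvec_of_common_neighbour (hφ : ∀ A B, IsRankOne (A - B) → IsRankOne (φ A - φ B))
    (h0 : φ 0 = 0) {y : Fin q → K} (hy : y ≠ 0) {a : Fin p → K}
    {A₁ A₂ G : Matrix (Fin m) (Fin n) D} (h₁ : φ A₁ ∉ Rvec y) (h₂ : φ A₂ ∉ Rvec y)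
    (hA₂ : IsRankOne A₂) (hG : IsRankOne G) (hGy : φ G ∈ Rvec y)
    (hA₁G : IsRankOne (A₁ - G)) (hA₂G : IsRankOne (A₂ - G)) (ha : φ A₁ ∈ Lvec a) :
    φ A₂ ∈ Lvec a := by
  obtain ⟨g, hg⟩ := mem_Rvec_iff.mp hGy
  obtain ⟨z₁, hz₁⟩ := mem_Lvec_iff.mp ha
  obtain ⟨a₂, z₂, -, -, hz₂⟩ := isRankOne_apply hφ h0 hA₂
  have hGa : φ G ∈ Lvec a := by
    have h := hφ _ _ hA₁G
    rw [hz₁, hg] at h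
    rw [hz₁] at h₁
    rw [hg]
    exact vecMulVec_mem_Lvec_of_isRankOne_sub hy h₁ h
  have hGa₂ : φ G ∈ Lvec a₂ := by
    have h := hφ _ _ hA₂G
    rw [hz₂, hg] at h
    rw [hz₂] at h₂
    rw [hg]
    exact vecMulVec_mem_Lvec_of_isRankOne_sub hy h₂ h
  exact Lvec_subset_of_mem (isRankOne_apply hφ h0 hG).ne_zero hGa hGa₂
    (mem_Lvec_iff.mpr ⟨z₂, hz₂⟩)

end AdjacencyPreserver

section Degenerate

variable {K : Type*} [DivisionRing K] {m n p q : ℕ}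
  {φ : Matrix (Fin m) (Fin n) D → Matrix (Fin p) (Fin q) K} {x₀ : Fin n → D} {w : Fin m → D}
  {y : Fin q → K}

theorem ne_of_apply_vecMulVec_notMem_Rvec (h0 : φ 0 = 0)
    (hR : ∀ u, φ (vecMulVec u x₀) ∈ Rvec y) (hL : ∀ v, φ (vecMulVec w v) ∈ Rvec y)
    {u : Fin m → D} {v : Fin n → D} (h : φ (vecMulVec u v) ∉ Rvec y) :
    u ≠ 0 ∧ v ≠ 0 ∧ u ≠ w ∧ v ≠ x₀ := by
  refine ⟨?_, ?_, ?_, ?_⟩ <;> rintro rfl <;> apply h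
  · rw [zero_vecMulVec, h0]
    exact zero_mem_Rvec y
  · rw [vecMulVec_zero_right, h0]
    exact zero_mem_Rvec y
  · exact hL v
  · exact hR u

theorem mem_Lvec_of_common_left_factor (hφ : ∀ A B, IsRankOne (A - B) → IsRankOne (φ A - φ B))
    (h0 : φ 0 = 0) (hy : y ≠ 0) (hx₀ : x₀ ≠ 0)
    (hR : ∀ u, φ (vecMulVec u x₀) ∈ Rvec y) (hL : ∀ v, φ (vecMulVec w v) ∈ Rvec y)
    {u : Fin m → D} {v₁ v₂ : Fin n → D} {a : Fin p → K}
    (h₁ : φ (vecMulVec u v₁) ∉ Rvec y) (h₂ : φ (vecMulVec u v₂) ∉ Rvec y)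
    (ha : φ (vecMulVec u v₁) ∈ Lvec a) : φ (vecMulVec u v₂) ∈ Lvec a := by
  obtain ⟨hu, -, -, hv₁⟩ := ne_of_apply_vecMulVec_notMem_Rvec h0 hR hL h₁
  obtain ⟨-, hv₂, -, hv₂'⟩ := ne_of_apply_vecMulVec_notMem_Rvec h0 hR hL h₂
  refine mem_Lvec_of_common_neighbour hφ h0 hy h₁ h₂ (.vecMulVec hu hv₂) (.vecMulVec hu hx₀)
    (hR u) ?_ ?_ ha
  · rw [← vecMulVec_sub]
    exact .vecMulVec hu (sub_ne_zero.mpr hv₁)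
  · rw [← vecMulVec_sub]
    exact .vecMulVec hu (sub_ne_zero.mpr hv₂')

theorem mem_Lvec_of_common_right_factor (hφ : ∀ A B, IsRankOne (A - B) → IsRankOne (φ A - φ B))
    (h0 : φ 0 = 0) (hy : y ≠ 0) (hw : w ≠ 0)
    (hR : ∀ u, φ (vecMulVec u x₀) ∈ Rvec y) (hL : ∀ v, φ (vecMulVec w v) ∈ Rvec y)
    {u₁ u₂ : Fin m → D} {v : Fin n → D} {a : Fin p → K}
    (h₁ : φ (vecMulVec u₁ v) ∉ Rvec y) (h₂ : φ (vecMulVec u₂ v) ∉ Rvec y)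
    (ha : φ (vecMulVec u₁ v) ∈ Lvec a) : φ (vecMulVec u₂ v) ∈ Lvec a := by
  obtain ⟨-, hv, hu₁, -⟩ := ne_of_apply_vecMulVec_notMem_Rvec h0 hR hL h₁
  obtain ⟨hu₂, -, hu₂', -⟩ := ne_of_apply_vecMulVec_notMem_Rvec h0 hR hL h₂
  refine mem_Lvec_of_common_neighbour hφ h0 hy h₁ h₂ (.vecMulVec hu₂ hv) (.vecMulVec hw hv)
    (hL v) ?_ ?_ ha
  · rw [← sub_vecMulVec]
    exact .vecMulVec (sub_ne_zero.mpr hu₁) hv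
  · rw [← sub_vecMulVec]
    exact .vecMulVec (sub_ne_zero.mpr hu₂') hv

theorem mem_Lvec_of_notMem_Rvec (hφ : ∀ A B, IsRankOne (A - B) → IsRankOne (φ A - φ B))
    (h0 : φ 0 = 0) (hy : y ≠ 0) (hx₀ : x₀ ≠ 0) (hw : w ≠ 0)
    (hR : ∀ u, φ (vecMulVec u x₀) ∈ Rvec y) (hL : ∀ v, φ (vecMulVec w v) ∈ Rvec y)
    {u₁ u₂ : Fin m → D} {v₁ v₂ : Fin n → D} {a : Fin p → K}
    (h₁ : φ (vecMulVec u₁ v₁) ∉ Rvec y) (h₂ : φ (vecMulVec u₂ v₂) ∉ Rvec y)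
    (ha : φ (vecMulVec u₁ v₁) ∈ Lvec a) : φ (vecMulVec u₂ v₂) ∈ Lvec a := by
  by_cases h₃ : φ (vecMulVec u₁ v₂) ∈ Rvec y
  · obtain ⟨hu₁, -, -, -⟩ := ne_of_apply_vecMulVec_notMem_Rvec h0 hR hL h₁
    obtain ⟨hu₂, hv₂, -, -⟩ := ne_of_apply_vecMulVec_notMem_Rvec h0 hR hL h₂
    have hv : v₁ ≠ v₂ := by rintro rfl; exact h₁ h₃
    have hu : u₂ ≠ u₁ := by rintro rfl; exact h₂ h₃
    refine mem_Lvec_of_common_neighbour hφ h0 hy h₁ h₂ (.vecMulVec hu₂ hv₂) (.vecMulVec hu₁ hv₂)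
      h₃ ?_ ?_ ha
    · rw [← vecMulVec_sub]
      exact .vecMulVec hu₁ (sub_ne_zero.mpr hv)
    · rw [← sub_vecMulVec]
      exact .vecMulVec (sub_ne_zero.mpr hu) hv₂
  · exact mem_Lvec_of_common_right_factor hφ h0 hy hw hR hL h₃ h₂
      (mem_Lvec_of_common_left_factor hφ h0 hy hx₀ hR hL h₁ h₃ ha)

theorem exists_forall_mem_Rvec_union_Lvec (hφ : ∀ A B, IsRankOne (A - B) → IsRankOne (φ A - φ B))
    (h0 : φ 0 = 0) (hy : y ≠ 0) (hx₀ : x₀ ≠ 0) (hw : w ≠ 0)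
    (hR : ∀ u, φ (vecMulVec u x₀) ∈ Rvec y) (hL : ∀ v, φ (vecMulVec w v) ∈ Rvec y) :
    ∃ x, x ≠ 0 ∧ ∀ M, rowRank M ≤ 1 → φ M ∈ Rvec y ∪ Lvec x := by
  by_cases hbad : ∃ u v, φ (vecMulVec u v) ∉ Rvec y
  · obtain ⟨u₀, v₀, h₀⟩ := hbad
    obtain ⟨hu₀, hv₀, -, -⟩ := ne_of_apply_vecMulVec_notMem_Rvec h0 hR hL h₀
    obtain ⟨a, z, ha, -, hφ₀⟩ := isRankOne_apply hφ h0 (.vecMulVec hu₀ hv₀)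
    refine ⟨a, ha, fun M hM => ?_⟩
    obtain ⟨u, v, rfl⟩ := exists_eq_vecMulVec_of_rowRank_le_one hM
    by_cases h : φ (vecMulVec u v) ∈ Rvec y
    · exact Or.inl h
    · exact Or.inr (mem_Lvec_of_notMem_Rvec hφ h0 hy hx₀ hw hR hL h₀ h
        (mem_Lvec_iff.mpr ⟨z, hφ₀⟩))
  · push Not at hbad
    obtain ⟨a, -, ha, -, -⟩ := isRankOne_apply hφ h0 (.vecMulVec hw hx₀)
    refine ⟨a, ha, fun M hM => Or.inl ?_⟩
    obtain ⟨u, v, rfl⟩ := exists_eq_vecMulVec_of_rowRank_le_one hM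
    exact hbad u v

end Degenerate

theorem exists_forall_mem_Rvec_union_Lvec_of_mem_Lvec {K : Type*} [DivisionRing K] {m n p q : ℕ}
    {φ : Matrix (Fin m) (Fin n) D → Matrix (Fin p) (Fin q) K} {x₀ : Fin n → D} {w : Fin m → D}
    {x : Fin p → K} (hφ : ∀ A B, IsRankOne (A - B) → IsRankOne (φ A - φ B))
    (h0 : φ 0 = 0) (hx : x ≠ 0) (hx₀ : x₀ ≠ 0) (hw : w ≠ 0)
    (hR : ∀ u, φ (vecMulVec u x₀) ∈ Lvec x) (hL : ∀ v, φ (vecMulVec w v) ∈ Lvec x) :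
    ∃ y, y ≠ 0 ∧ ∀ M, rowRank M ≤ 1 → φ M ∈ Rvec y ∪ Lvec x := by
  set ψ := fun A => ((φ A).map MulOpposite.op)ᵀ
  have hψ : ∀ A B, IsRankOne (A - B) → IsRankOne (ψ A - ψ B) := fun A B h => by
    simpa [ψ, Matrix.map_sub] using (hφ A B h).transpose_map_op
  have hx' : MulOpposite.op ∘ x ≠ 0 := fun h => hx (funext fun i => by simpa using congrFun h i)
  obtain ⟨y', hy', hψy'⟩ := exists_forall_mem_Rvec_union_Lvec hψ (by simp [ψ, h0]) hx' hx₀ hw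
    (fun u => transpose_map_op_mem_Rvec_iff.mpr (hR u))
    (fun v => transpose_map_op_mem_Rvec_iff.mpr (hL v))
  refine ⟨MulOpposite.unop ∘ y', fun h => hy' (funext fun j => by simpa using congrFun h j),
    fun M hM => ?_⟩
  rcases hψy' M hM with h | h
  · exact Or.inr (transpose_map_op_mem_Rvec_iff.mp h)
  · exact Or.inl (transpose_map_op_mem_Lvec_iff.mp h)

theorem stmt7_general (m n p q : ℕ) (φ : Matrix (Fin m) (Fin n) D → Matrix (Fin p) (Fin q) D)
    (hφ : ∀ A B, Adjacent A B → Adjacent (φ A) (φ B)) (h0 : φ 0 = 0)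
    (d : Submodule D (Fin n → D)) (hd : Module.finrank D d = 1)
    (e : Submodule Dᵐᵒᵖ (Fin m → D)) (he : Module.finrank Dᵐᵒᵖ e = 1)
    (h : (∃ d' : Submodule D (Fin q → D), Module.finrank D d' = 1 ∧
            (∀ M : Matrix (Fin m) (Fin n) D, M ∈ Rsub d → φ M ∈ Rsub d') ∧
            (∀ M : Matrix (Fin m) (Fin n) D, M ∈ Lsub e → φ M ∈ Rsub d')) ∨
         (∃ e' : Submodule Dᵐᵒᵖ (Fin p → D), Module.finrank Dᵐᵒᵖ e' = 1 ∧
            (∀ M : Matrix (Fin m) (Fin n) D, M ∈ Rsub d → φ M ∈ Lsub e') ∧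
            (∀ M : Matrix (Fin m) (Fin n) D, M ∈ Lsub e → φ M ∈ Lsub e'))) :
    DegZero φ := by
  obtain ⟨x₀, hx₀d, hx₀⟩ := Submodule.exists_mem_ne_zero_of_ne_bot (p := d)
    (by rintro rfl; simp at hd)
  obtain ⟨w, hwe, hw⟩ := Submodule.exists_mem_ne_zero_of_ne_bot (p := e)
    (by rintro rfl; simp at he)
  have hφ' : ∀ A B, IsRankOne (A - B) → IsRankOne (φ A - φ B) := by
    simpa only [Adjacent, rowRank_eq_one_iff] using hφ
  rcases h with ⟨d', hd', hR, hL⟩ | ⟨e', he', hR, hL⟩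
  · obtain ⟨y, hy, hd'y⟩ := exists_Rsub_subset_Rvec (m := p) hd'
    obtain ⟨x, hx, hM⟩ := exists_forall_mem_Rvec_union_Lvec hφ' h0 hy hx₀ hw
      (fun u => hd'y (hR _ (vecMulVec_mem_Rsub u hx₀d)))
      (fun v => hd'y (hL _ (vecMulVec_mem_Lsub hwe v)))
    exact ⟨x, hx, y, hy, hM⟩
  · obtain ⟨x, hx, he'x⟩ := exists_Lsub_subset_Lvec (n := q) he'
    obtain ⟨y, hy, hM⟩ := exists_forall_mem_Rvec_union_Lvec_of_mem_Lvec hφ' h0 hx hx₀ hw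
      (fun u => he'x (hR _ (vecMulVec_mem_Rsub u hx₀d)))
      (fun v => he'x (hL _ (vecMulVec_mem_Lsub hwe v)))
    exact ⟨x, hx, y, hy, hM⟩

/-- Lemma 3.9. If `φ(R_d)` and `φ(L_e)` are both contained in one
common `R_{d'}`, or both in one common `L_{e'}`, then `φ` is degenerate with respect
to `0`. -/
theorem stmt7 (m n p q : ℕ) (hm : 0 < m) (hn : 0 < n) (hp : 0 < p) (hq : 0 < q)
    (φ : Matrix (Fin m) (Fin n) D → Matrix (Fin p) (Fin q) D)
    (hφ : ∀ A B, Adjacent A B → Adjacent (φ A) (φ B)) (h0 : φ 0 = 0)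
    (d : Submodule D (Fin n → D)) (hd : Module.finrank D d = 1)
    (e : Submodule Dᵐᵒᵖ (Fin m → D)) (he : Module.finrank Dᵐᵒᵖ e = 1)
    (h : (∃ d' : Submodule D (Fin q → D), Module.finrank D d' = 1 ∧
            (∀ M : Matrix (Fin m) (Fin n) D, M ∈ Rsub d → φ M ∈ Rsub d') ∧
            (∀ M : Matrix (Fin m) (Fin n) D, M ∈ Lsub e → φ M ∈ Rsub d')) ∨
         (∃ e' : Submodule Dᵐᵒᵖ (Fin p → D), Module.finrank Dᵐᵒᵖ e' = 1 ∧
            (∀ M : Matrix (Fin m) (Fin n) D, M ∈ Rsub d → φ M ∈ Lsub e') ∧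
            (∀ M : Matrix (Fin m) (Fin n) D, M ∈ Lsub e → φ M ∈ Lsub e'))) :
    DegZero φ :=
  stmt7_general m n p q φ hφ h0 d hd e he h
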